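/- arXiv:1406.1704 — 6 statements merged into one kernel-verified Lean document; each statement's English description precedes it below -/
import Mathlib

section
/- Let g and h be arithmetic functions with g(n) ≪ 4^n n^s and h(n) ≪ 4^n n^s for some real s. Then the proper Dirichlet convolution (g *' h)(n) := Σ_{d | n, 1 < d < n} g(d) h(n/d) satisfies (g *' h)(n) ≪ 3^n as n → ∞. -/
/-! A proper divisor `d > 1` of `n` has cofactor `m = n / d ≥ 2`, so `(d - 2)(m - 2) ≥ 0` gives
`d + m ≤ n / 2 + 2`. Hence each term is `≪ 4^(d + m) n^s ≪ 2^n n^s`, and the at most `n` terms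
sum to `≪ 2^n n^(s + 1) ≪ 3^n`. -/

open Finset

lemma four_pow_mul_four_pow_le {d m : ℕ} (hd : 2 ≤ d) (hm : 2 ≤ m) :
    (4 : ℝ) ^ d * 4 ^ m ≤ 16 * 2 ^ (d * m) :=
  calc (4 : ℝ) ^ d * 4 ^ m = 2 ^ (2 * (d + m)) := by rw [← pow_add, pow_mul]; norm_num
    _ ≤ 2 ^ (d * m + 4) := pow_le_pow_right₀ (by norm_num) (by nlinarith)
    _ = 16 * 2 ^ (d * m) := by ring

lemma exists_rpow_mul_pow_le_mul_pow (s : ℝ) {a b : ℝ} (ha : 0 ≤ a) (hab : a < b) :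
    ∃ M : ℝ, ∀ n : ℕ, 1 ≤ n → (n : ℝ) ^ s * a ^ n ≤ M * b ^ n := by
  have hb : 0 < b := ha.trans_lt hab
  have hr : |a / b| < 1 := by
    rw [abs_of_nonneg (by positivity)]
    exact (div_lt_one hb).2 hab
  obtain ⟨M, hM⟩ := (tendsto_pow_const_mul_const_pow_of_abs_lt_one ⌈s⌉₊ hr).bddAbove_range
  refine ⟨M, fun n hn => ?_⟩
  calc (n : ℝ) ^ s * a ^ n ≤ (n : ℝ) ^ ⌈s⌉₊ * a ^ n := by
        gcongr
        rw [← Real.rpow_natCast]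
        exact Real.rpow_le_rpow_of_exponent_le (by exact_mod_cast hn) (Nat.le_ceil s)
    _ = ((n : ℝ) ^ ⌈s⌉₊ * (a / b) ^ n) * b ^ n := by rw [div_pow]; field_simp
    _ ≤ M * b ^ n := by gcongr; exact hM ⟨n, rfl⟩

lemma nonneg_of_abs_le_mul_pow_mul_rpow {f : ℕ → ℝ} {C a s : ℝ} (ha : 0 < a)
    (hf : ∀ n : ℕ, 1 ≤ n → |f n| ≤ C * a ^ n * (n : ℝ) ^ s) : 0 ≤ C := by
  have h1 := (abs_nonneg _).trans (hf 1 le_rfl)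
  simp only [pow_one, Nat.cast_one, Real.one_rpow, mul_one] at h1
  exact nonneg_of_mul_nonneg_left h1 ha

lemma abs_mul_le_of_four_pow_bounds {f g : ℕ → ℝ} {Cf Cg s : ℝ}
    (hf : ∀ n : ℕ, 1 ≤ n → |f n| ≤ Cf * 4 ^ n * (n : ℝ) ^ s)
    (hg : ∀ n : ℕ, 1 ≤ n → |g n| ≤ Cg * 4 ^ n * (n : ℝ) ^ s)
    {d m : ℕ} (hd : 2 ≤ d) (hm : 2 ≤ m) :
    |f d * g m| ≤ Cf * Cg * 16 * (2 ^ (d * m) * ((d * m : ℕ) : ℝ) ^ s) := by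
  have hCf := nonneg_of_abs_le_mul_pow_mul_rpow (by norm_num) hf
  have hCg := nonneg_of_abs_le_mul_pow_mul_rpow (by norm_num) hg
  have hfd := hf d (by omega)
  have hgm := hg m (by omega)
  calc |f d * g m| ≤ (Cf * 4 ^ d * (d : ℝ) ^ s) * (Cg * 4 ^ m * (m : ℝ) ^ s) := by
        rw [abs_mul]
        exact mul_le_mul hfd hgm (abs_nonneg _) ((abs_nonneg _).trans hfd)
    _ = Cf * Cg * (4 ^ d * 4 ^ m) * ((d * m : ℕ) : ℝ) ^ s := by
        rw [Nat.cast_mul, Real.mul_rpow (by positivity) (by positivity)]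
        ring
    _ ≤ Cf * Cg * (16 * 2 ^ (d * m)) * ((d * m : ℕ) : ℝ) ^ s := by
        gcongr ?_ * _
        exact mul_le_mul_of_nonneg_left (four_pow_mul_four_pow_le hd hm) (by positivity)
    _ = Cf * Cg * 16 * (2 ^ (d * m) * ((d * m : ℕ) : ℝ) ^ s) := by ring

namespace Nat

lemma two_le_div_of_mem_properDivisors {n d : ℕ} (hd : d ∈ n.properDivisors) : 2 ≤ n / d := by
  obtain ⟨⟨k, rfl⟩, hlt⟩ := mem_properDivisors.1 hd
  rw [Nat.mul_div_cancel_left k (pos_of_mem_properDivisors hd)]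
  by_contra! hk
  interval_cases k <;> simp at hlt

lemma card_filter_properDivisors_le (p : ℕ → Prop) [DecidablePred p] (n : ℕ) :
    #(n.properDivisors.filter p) ≤ n :=
  (card_filter_le _ _).trans <|
    (card_le_card properDivisors_subset_divisors).trans (card_divisors_le_self n)

end Nat

/-- If `g(n) ≪ 4^n n^s` and `h(n) ≪ 4^n n^s`, then their proper Dirichlet
convolution `(g *' h)(n) = ∑_{d ∣ n, 1 < d < n} g(d) h(n/d)` satisfies
`(g *' h)(n) ≪ 3^n`. -/
theorem stmt5 (g h : ℕ → ℝ) (s : ℝ)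
    (hg : ∃ C : ℝ, ∀ n : ℕ, 1 ≤ n → |g n| ≤ C * 4 ^ n * (n : ℝ) ^ s)
    (hh : ∃ C : ℝ, ∀ n : ℕ, 1 ≤ n → |h n| ≤ C * 4 ^ n * (n : ℝ) ^ s) :
    ∃ C : ℝ, ∀ n : ℕ, 1 ≤ n →
      |∑ d ∈ n.properDivisors.filter (1 < ·), g d * h (n / d)| ≤ C * 3 ^ n := by
  obtain ⟨Cg, hCg⟩ := hg
  obtain ⟨Ch, hCh⟩ := hh
  obtain ⟨M, hM⟩ := exists_rpow_mul_pow_le_mul_pow (s + 1) (a := 2) (b := 3) (by norm_num)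
    (by norm_num)
  refine ⟨Cg * Ch * 16 * M, fun n hn => ?_⟩
  have hterm : ∀ d ∈ n.properDivisors.filter (1 < ·),
      |g d * h (n / d)| ≤ Cg * Ch * 16 * (2 ^ n * (n : ℝ) ^ s) := by
    intro d hd
    obtain ⟨hdiv, hd1⟩ := mem_filter.1 hd
    have hmul := abs_mul_le_of_four_pow_bounds hCg hCh hd1
      (Nat.two_le_div_of_mem_properDivisors hdiv)
    rwa [Nat.mul_div_cancel' (Nat.mem_properDivisors.1 hdiv).1] at hmul
  have hC : 0 ≤ Cg * Ch * 16 := by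
    have := nonneg_of_abs_le_mul_pow_mul_rpow (by norm_num) hCg
    have := nonneg_of_abs_le_mul_pow_mul_rpow (by norm_num) hCh
    positivity
  calc |∑ d ∈ n.properDivisors.filter (1 < ·), g d * h (n / d)|
      ≤ ∑ d ∈ n.properDivisors.filter (1 < ·), |g d * h (n / d)| := abs_sum_le_sum_abs _ _
    _ ≤ n * (Cg * Ch * 16 * (2 ^ n * (n : ℝ) ^ s)) := by
        refine (sum_le_card_nsmul _ _ _ hterm).trans ?_
        rw [nsmul_eq_mul]
        gcongr
        exact_mod_cast Nat.card_filter_properDivisors_le _ n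
    _ = Cg * Ch * 16 * ((n : ℝ) ^ (s + 1) * 2 ^ n) := by
        rw [Real.rpow_add_one (by positivity)]
        ring
    _ ≤ Cg * Ch * 16 * M * 3 ^ n := by
        rw [mul_assoc _ M]
        exact mul_le_mul_of_nonneg_left (hM n hn) hC
end

section
/- The generating function F(z) = Σ_{n≥1} f(n) z^n of the number of arithmetic formulas satisfies the functional equation F(z)^2 - F(z) + F̃(z) = 0 in the region |z| < R, where R is the radius of convergence of F and F̃(z) := z + Σ_{d≥2} f(d)(F(z^d) - z^d). -/
/-- Arithmetic formulas built from the constant 1, addition and multiplication. -/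
inductive Formula : Type
  | one : Formula
  | add : Formula → Formula → Formula
  | mul : Formula → Formula → Formula

/-- The value of an arithmetic formula. -/
def Formula.val : Formula → ℕ
  | .one => 1
  | .add a b => a.val + b.val
  | .mul a b => a.val * b.val

/-- Validity: multiplication by 1 is not allowed. -/
def Formula.Valid : Formula → Prop
  | .one => True
  | .add a b => a.Valid ∧ b.Valid
  | .mul a b => a.Valid ∧ b.Valid ∧ 2 ≤ a.val ∧ 2 ≤ b.val

/-- `f n` is the number of arithmetic formulas for `n`. -/
noncomputable def f (n : ℕ) : ℕ := {A : Formula | A.Valid ∧ A.val = n}.ncard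

/-- The generating function `F(z) = ∑_{n ≥ 1} f(n) z^n`. -/
noncomputable def F (z : ℂ) : ℂ := ∑' n : ℕ, (f n : ℂ) * z ^ n

/-- `F̃(z) = z + ∑_{d ≥ 2} f(d) (F(z^d) - z^d)`. -/
noncomputable def Ftilde (z : ℂ) : ℂ :=
  z + ∑' d : ℕ, if 2 ≤ d then (f d : ℂ) * (F (z ^ d) - z ^ d) else 0


/-!
Splitting a formula at its root gives, for `n ≥ 2`,
`f n = ∑_{a+b=n} f a f b + ∑_{ab=n, a,b ≥ 2} f a f b`.
In generating functions the first sum is `F(z)²`, while the second is the double series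
`∑_{d,k ≥ 2} f d f k z^{dk}`, whose rows (summed over `k`) are the terms `f d (F(z^d) - z^d)`
of `F̃(z) - z`. Summability of `∑ f n ‖z‖ⁿ` forces `‖z‖ < 1` because `f n ≥ 1`, and then
`‖z‖^{dk} ≤ ‖z‖^{d+k}` makes the double series absolutely convergent, so it may be summed
either by rows or along the fibres of `(d, k) ↦ dk`.
-/

namespace Formula

deriving instance DecidableEq for Formula

lemma one_le_val (A : Formula) : 1 ≤ A.val := by
  induction A with
  | one => simp [val]
  | add a b ha hb => simp only [val]; omega
  | mul a b ha hb => simp only [val]; nlinarith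

lemma finite_setOf_valid_val_le (n : ℕ) : {A : Formula | A.Valid ∧ A.val ≤ n}.Finite := by
  induction n with
  | zero =>
    refine Set.finite_empty.subset fun A ⟨_, h⟩ => ?_
    have := one_le_val A; omega
  | succ n ih =>
    refine (((ih.image2 add ih).union (ih.image2 mul ih)).insert one).subset ?_
    rintro (_ | ⟨a, b⟩ | ⟨a, b⟩) ⟨hv, hn⟩
    · exact Set.mem_insert _ _
    · have := a.one_le_val; have := b.one_le_val
      simp only [val] at hn
      exact Or.inr (Or.inl ⟨a, ⟨hv.1, by omega⟩, b, ⟨hv.2, by omega⟩, rfl⟩)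
    · obtain ⟨ha, hb, ha2, hb2⟩ := hv
      simp only [val] at hn
      exact Or.inr (Or.inr ⟨a, ⟨ha, by nlinarith⟩, b, ⟨hb, by nlinarith⟩, rfl⟩)

lemma finite_setOf_valid_val_eq (n : ℕ) : {A : Formula | A.Valid ∧ A.val = n}.Finite :=
  (finite_setOf_valid_val_le n).subset fun _ ⟨hv, hn⟩ => ⟨hv, hn.le⟩

lemma exists_valid_val_eq {n : ℕ} (hn : 1 ≤ n) : ∃ A : Formula, A.Valid ∧ A.val = n := by
  induction n, hn using Nat.le_induction with
  | base => exact ⟨one, trivial, rfl⟩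
  | succ n _ ih =>
    obtain ⟨A, hv, rfl⟩ := ih
    exact ⟨add A one, ⟨hv, trivial⟩, rfl⟩

end Formula

open Formula Finset

noncomputable def formulas (n : ℕ) : Finset Formula := (finite_setOf_valid_val_eq n).toFinset

@[simp]
lemma mem_formulas {n : ℕ} {A : Formula} : A ∈ formulas n ↔ A.Valid ∧ A.val = n :=
  Set.Finite.mem_toFinset _

lemma f_eq_card_formulas (n : ℕ) : f n = (formulas n).card :=
  Set.ncard_eq_toFinset_card _ _

lemma f_zero : f 0 = 0 := by
  simpa [f_eq_card_formulas, eq_empty_iff_forall_notMem] using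
    fun A _ => Nat.one_le_iff_ne_zero.1 (one_le_val A)

lemma f_one : f 1 = 1 := by
  rw [f_eq_card_formulas, card_eq_one]
  refine ⟨one, eq_singleton_iff_unique_mem.2 ⟨mem_formulas.2 ⟨trivial, rfl⟩, ?_⟩⟩
  rintro (_ | ⟨a, b⟩ | ⟨a, b⟩) h <;> obtain ⟨hv, hn⟩ := mem_formulas.1 h
  · rfl
  · have := a.one_le_val; have := b.one_le_val
    simp only [Formula.val] at hn; omega
  · obtain ⟨-, -, ha2, hb2⟩ := hv
    simp only [Formula.val] at hn; nlinarith

lemma one_le_f {n : ℕ} (hn : 1 ≤ n) : 1 ≤ f n :=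
  (Set.ncard_pos (finite_setOf_valid_val_eq n)).2 (exists_valid_val_eq hn)

noncomputable def addCount (n : ℕ) : ℕ := ∑ p ∈ antidiagonal n, f p.1 * f p.2

noncomputable def mulCount (n : ℕ) : ℕ :=
  ∑ p ∈ n.divisorsAntidiagonal with 2 ≤ p.1 ∧ 2 ≤ p.2, f p.1 * f p.2

noncomputable def nodes (g : Formula → Formula → Formula) (s : Finset (ℕ × ℕ)) :
    Finset Formula :=
  (s.sigma fun p => formulas p.1 ×ˢ formulas p.2).image fun x => g x.2.1 x.2.2

lemma card_nodes {g : Formula → Formula → Formula} (hg : Function.Injective2 g)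
    (s : Finset (ℕ × ℕ)) : (nodes g s).card = ∑ p ∈ s, f p.1 * f p.2 := by
  rw [nodes, card_image_of_injOn, card_sigma]
  · simp only [card_product, f_eq_card_formulas]
  rintro ⟨⟨i, j⟩, a, b⟩ hx ⟨⟨i', j'⟩, a', b'⟩ hx' h
  obtain ⟨rfl, rfl⟩ := hg h
  simp only [coe_sigma, Set.mem_sigma_iff, mem_coe, mem_product,
    mem_formulas] at hx hx'
  obtain ⟨-, ⟨-, rfl⟩, -, rfl⟩ := hx
  obtain ⟨-, ⟨-, hi⟩, -, hj⟩ := hx'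
  simp [hi, hj]

lemma formulas_eq_union {n : ℕ} (hn : 2 ≤ n) :
    formulas n = nodes add (antidiagonal n) ∪
      nodes mul {p ∈ n.divisorsAntidiagonal | 2 ≤ p.1 ∧ 2 ≤ p.2} := by
  have hn0 : n ≠ 0 := by omega
  ext (_ | ⟨a, b⟩ | ⟨a, b⟩) <;> simp [nodes, Valid, Formula.val, hn0]
  · omega
  all_goals tauto

lemma f_eq_addCount_add_mulCount {n : ℕ} (hn : 2 ≤ n) : f n = addCount n + mulCount n := by
  rw [f_eq_card_formulas, formulas_eq_union hn, card_union_of_disjoint,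
    card_nodes (fun _ _ _ _ => add.inj), card_nodes (fun _ _ _ _ => mul.inj), addCount, mulCount]
  simp only [disjoint_left, nodes, mem_image]
  rintro _ ⟨x, -, rfl⟩ ⟨y, -, h⟩
  cases h

lemma HasSum.sum_divisorsAntidiagonal {α : Type*} [AddCommGroup α] [UniformSpace α]
    [IsUniformAddGroup α] [CompleteSpace α] [T2Space α] {g : ℕ × ℕ → α} {a : α}
    (hg : HasSum g a) (hg0 : ∀ p : ℕ × ℕ, p.1 * p.2 = 0 → g p = 0) :
    HasSum (fun n : ℕ => ∑ p ∈ n.divisorsAntidiagonal, g p) a := by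
  convert hg.tsum_fiberwise (fun p => p.1 * p.2) using 1
  funext n
  rcases eq_or_ne n 0 with rfl | hn
  · simp [tsum_congr fun p : (fun p : ℕ × ℕ => p.1 * p.2) ⁻¹' {0} => hg0 p.1 p.2]
  · rw [show (fun p : ℕ × ℕ => p.1 * p.2) ⁻¹' {n} = n.divisorsAntidiagonal by ext; simp [hn],
      Finset.tsum_subtype']

lemma lt_one_of_summable_f_mul_pow {x : ℝ} (hx : 0 ≤ x)
    (h : Summable fun n => (f n : ℝ) * x ^ n) : x < 1 := by
  have hle (n : ℕ) : x ^ (n + 1) ≤ f (n + 1) * x ^ (n + 1) :=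
    le_mul_of_one_le_left (pow_nonneg hx _) (mod_cast one_le_f n.succ_pos)
  have hshift : Summable fun n => x ^ (n + 1) :=
    ((summable_nat_add_iff 1).2 h).of_nonneg_of_le (fun n => pow_nonneg hx _) hle
  simpa [abs_of_nonneg hx] using
    summable_geometric_iff_norm_lt_one.1 ((summable_nat_add_iff (f := (x ^ ·)) 1).1 hshift)

section Analytic

variable {z : ℂ}

lemma summable_norm_f_mul_pow (hz : Summable fun n => (f n : ℝ) * ‖z‖ ^ n) {w : ℂ}
    (hw : ‖w‖ ≤ ‖z‖) : Summable fun n => ‖(f n : ℂ) * w ^ n‖ :=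
  hz.of_nonneg_of_le (fun _ => norm_nonneg _) fun n => by
    rw [norm_mul, norm_pow, Complex.norm_natCast]
    gcongr

lemma hasSum_F (hz : Summable fun n => (f n : ℝ) * ‖z‖ ^ n) {w : ℂ} (hw : ‖w‖ ≤ ‖z‖) :
    HasSum (fun n => (f n : ℂ) * w ^ n) (F w) :=
  (summable_norm_f_mul_pow hz hw).of_norm.hasSum

lemma hasSum_addCount (hz : Summable fun n => (f n : ℝ) * ‖z‖ ^ n) :
    HasSum (fun n => (addCount n : ℂ) * z ^ n) (F z ^ 2) := by
  have h := summable_norm_f_mul_pow hz le_rfl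
  rw [sq, F, tsum_mul_tsum_eq_tsum_sum_antidiagonal_of_summable_norm h h]
  refine (summable_norm_sum_mul_antidiagonal_of_summable_norm h h).of_norm.hasSum.congr_fun
    fun n => ?_
  rw [addCount, Nat.cast_sum, sum_mul]
  refine sum_congr rfl fun p hp => ?_
  rw [← mem_antidiagonal.1 hp]
  push_cast
  ring

noncomputable def mulTerm (z : ℂ) (p : ℕ × ℕ) : ℂ :=
  if 2 ≤ p.1 ∧ 2 ≤ p.2 then f p.1 * f p.2 * z ^ (p.1 * p.2) else 0

lemma norm_mulTerm_le (hz : ‖z‖ ≤ 1) (p : ℕ × ℕ) :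
    ‖mulTerm z p‖ ≤ (f p.1 * ‖z‖ ^ p.1) * (f p.2 * ‖z‖ ^ p.2) := by
  unfold mulTerm
  split_ifs with hp
  · rw [norm_mul, norm_mul, norm_pow, Complex.norm_natCast, Complex.norm_natCast,
      mul_mul_mul_comm, ← pow_add]
    obtain ⟨h1, h2⟩ := hp
    exact mul_le_mul_of_nonneg_left (pow_le_pow_of_le_one (norm_nonneg z) hz (by nlinarith))
      (by positivity)
  · rw [norm_zero]
    positivity

lemma summable_mulTerm (hz : Summable fun n => (f n : ℝ) * ‖z‖ ^ n) : Summable (mulTerm z) :=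
  .of_norm_bounded (hz.mul_of_nonneg hz (fun _ => by positivity) fun _ => by positivity)
    (norm_mulTerm_le (lt_one_of_summable_f_mul_pow (norm_nonneg z) hz).le)

lemma hasSum_mulTerm_row (hz : Summable fun n => (f n : ℝ) * ‖z‖ ^ n) (d : ℕ) :
    HasSum (fun k => mulTerm z (d, k))
      (if 2 ≤ d then (f d : ℂ) * (F (z ^ d) - z ^ d) else 0) := by
  split_ifs with hd
  · have hzd : ‖z ^ d‖ ≤ ‖z‖ := by
      rw [norm_pow]
      exact pow_le_of_le_one (norm_nonneg z)
        (lt_one_of_summable_f_mul_pow (norm_nonneg z) hz).le (by omega)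
    refine (((hasSum_F hz hzd).sub (hasSum_ite_eq 1 (z ^ d))).mul_left (f d : ℂ)).congr_fun
      fun k => ?_
    rcases k with _ | _ | k
    · simp [mulTerm, f_zero]
    · simp [mulTerm, f_one]
    · simp [mulTerm, hd, pow_mul]
      ring
  · simp [mulTerm, hd, hasSum_zero]

lemma hasSum_mulTerm (hz : Summable fun n => (f n : ℝ) * ‖z‖ ^ n) :
    HasSum (mulTerm z) (Ftilde z - z) := by
  have h := (summable_mulTerm hz).hasSum
  rwa [Ftilde, add_sub_cancel_left, (h.prod_fiberwise (hasSum_mulTerm_row hz)).tsum_eq]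

lemma hasSum_mulCount (hz : Summable fun n => (f n : ℝ) * ‖z‖ ^ n) :
    HasSum (fun n => (mulCount n : ℂ) * z ^ n) (Ftilde z - z) := by
  have hvanish (p : ℕ × ℕ) (hp : p.1 * p.2 = 0) : mulTerm z p = 0 := by
    rcases Nat.mul_eq_zero.1 hp with h | h <;> simp [mulTerm, h]
  refine ((hasSum_mulTerm hz).sum_divisorsAntidiagonal hvanish).congr_fun fun n => ?_
  rw [mulCount, sum_filter, Nat.cast_sum, sum_mul]
  refine sum_congr rfl fun p hp => ?_
  rw [mulTerm, ← (Nat.mem_divisorsAntidiagonal.1 hp).1]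
  split_ifs <;> simp

end Analytic

lemma f_eq_addCount_add_mulCount_add_ite (n : ℕ) :
    f n = addCount n + mulCount n + if n = 1 then 1 else 0 := by
  match n with
  | 0 => simp [f_zero, addCount, mulCount]
  | 1 => simp [f_one, f_zero, addCount, mulCount, Nat.antidiagonal_succ]
  | n + 2 => simp [f_eq_addCount_add_mulCount (Nat.le_add_left 2 n)]

/-- Inside the disc of convergence of `F` (i.e. for `z` with `‖z‖ < R`, `R` the
radius of convergence of `F`), one has `F(z)^2 - F(z) + F̃(z) = 0`. -/
theorem stmt7 (z : ℂ)
    (hz : ∃ r : ℝ, ‖z‖ < r ∧ Summable fun n : ℕ => (f n : ℝ) * r ^ n) :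
    F z ^ 2 - F z + Ftilde z = 0 := by
  obtain ⟨r, hzr, hr⟩ := hz
  have hsum : Summable fun n => (f n : ℝ) * ‖z‖ ^ n :=
    hr.of_nonneg_of_le (fun _ => by positivity) fun n => by gcongr
  have hdecomp := ((hasSum_addCount hsum).add (hasSum_mulCount hsum)).add (hasSum_ite_eq 1 z)
  have hF : F z = F z ^ 2 + (Ftilde z - z) + z :=
    (hasSum_F hsum le_rfl).unique <| hdecomp.congr_fun fun n => by
      rw [f_eq_addCount_add_mulCount_add_ite]
      split_ifs with hn <;> simp [hn, add_mul]
  linear_combination -hF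
end

section
/- Fix ε > 0 and let c = (1-ε)/log 4. Then the number of positive integers n ≤ x such that there exists an arithmetic exponential formula for n of length less than c·log n is O(x^{1-ε}) as x → ∞. In particular, for almost all n, the shortest arithmetic exponential formula for n has length at least log n / log 4. -/
/-!
The Polish-notation word of a formula over the alphabet `{1, +, ×, ∧}` is prefix-free, so padding
it with a fixed symbol up to length `m` is injective on formulas of length at most `m`: there
are at most `4 ^ m` of them, hence at most `4 ^ m` values of such formulas. A formula for
`n ≤ x` of length less than `c · log n` has length at most `⌊c · log x⌋`, and
`4 ^ ⌊c · log x⌋ ≤ x ^ (c · log 4) = x ^ (1 - ε)`.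
-/

/-- Arithmetic exponential formulas: built from 1, addition, multiplication
and exponentiation. -/
inductive ExpFormula : Type
  | one : ExpFormula
  | add : ExpFormula → ExpFormula → ExpFormula
  | mul : ExpFormula → ExpFormula → ExpFormula
  | pow : ExpFormula → ExpFormula → ExpFormula

/-- The value of an arithmetic exponential formula. -/
def ExpFormula.val : ExpFormula → ℕ
  | .one => 1
  | .add a b => a.val + b.val
  | .mul a b => a.val * b.val
  | .pow a b => a.val ^ b.val

/-- Validity: `1` is never an argument of a multiplication or an exponentiation. -/
def ExpFormula.Valid : ExpFormula → Prop
  | .one => True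
  | .add a b => a.Valid ∧ b.Valid
  | .mul a b => a.Valid ∧ b.Valid ∧ 2 ≤ a.val ∧ 2 ≤ b.val
  | .pow a b => a.Valid ∧ b.Valid ∧ 2 ≤ a.val ∧ 2 ≤ b.val

/-- The length (number of nodes) of an arithmetic exponential formula. -/
def ExpFormula.size : ExpFormula → ℕ
  | .one => 1
  | .add a b => a.size + b.size + 1
  | .mul a b => a.size + b.size + 1
  | .pow a b => a.size + b.size + 1

namespace ExpFormula

def encode : ExpFormula → List (Fin 4)
  | .one => [0]
  | .add a b => 1 :: (a.encode ++ b.encode)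
  | .mul a b => 2 :: (a.encode ++ b.encode)
  | .pow a b => 3 :: (a.encode ++ b.encode)

@[simp]
lemma length_encode : ∀ E : ExpFormula, E.encode.length = E.size
  | .one => rfl
  | .add a b | .mul a b | .pow a b => by
    simp [encode, size, length_encode a, length_encode b]

lemma eq_of_encode_append_eq : ∀ {E E' : ExpFormula} {l l' : List (Fin 4)},
    E.encode ++ l = E'.encode ++ l' → E = E'
  | .one, .one, _, _, _ => rfl
  | .add a b, .add a' b', _, _, h | .mul a b, .mul a' b', _, _, h
  | .pow a b, .pow a' b', _, _, h => by
    simp only [encode, List.cons_append, List.cons.injEq, List.append_assoc, true_and] at h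
    obtain rfl := eq_of_encode_append_eq h
    obtain rfl := eq_of_encode_append_eq (List.append_cancel_left h)
    rfl
  | .one, .add .., _, _, h | .one, .mul .., _, _, h | .one, .pow .., _, _, h
  | .add .., .one, _, _, h | .add .., .mul .., _, _, h | .add .., .pow .., _, _, h
  | .mul .., .one, _, _, h | .mul .., .add .., _, _, h | .mul .., .pow .., _, _, h
  | .pow .., .one, _, _, h | .pow .., .add .., _, _, h | .pow .., .mul .., _, _, h => by
    simp [encode] at h

def paddedEncode (m : ℕ) (E : {E : ExpFormula | E.size ≤ m}) : List.Vector (Fin 4) m :=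
  ⟨E.1.encode ++ List.replicate (m - E.1.size) 0, by simp [Nat.add_sub_of_le E.2]⟩

lemma paddedEncode_injective (m : ℕ) : Function.Injective (paddedEncode m) :=
  fun _ _ h => Subtype.ext (eq_of_encode_append_eq (congrArg Subtype.val h))

instance (m : ℕ) : Finite {E : ExpFormula | E.size ≤ m} :=
  Finite.of_injective _ (paddedEncode_injective m)

lemma ncard_size_le (m : ℕ) : {E : ExpFormula | E.size ≤ m}.ncard ≤ 4 ^ m := by
  simpa using Nat.card_le_card_of_injective _ (paddedEncode_injective m)

lemma ncard_le_of_subset_image_val {S : Set ℕ} {m : ℕ}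
    (h : S ⊆ val '' {E : ExpFormula | E.size ≤ m}) : S.ncard ≤ 4 ^ m :=
  (Set.ncard_le_ncard h).trans ((Set.ncard_image_le (Set.toFinite _)).trans (ncard_size_le m))

lemma val_pos : ∀ E : ExpFormula, 0 < E.val
  | .one => Nat.one_pos
  | .add a _ => Nat.add_pos_left a.val_pos _
  | .mul a b => Nat.mul_pos a.val_pos b.val_pos
  | .pow a _ => Nat.pow_pos a.val_pos

section ShortFormula

variable {E : ExpFormula} {c : ℝ}

lemma pos_of_size_lt_mul_log (h : (E.size : ℝ) < c * Real.log E.val) : 0 < c :=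
  pos_of_mul_pos_left ((Nat.cast_nonneg _).trans_lt h) (Real.log_natCast_nonneg _)

lemma size_le_floor_of_size_lt_mul_log {x : ℝ} (hx : (E.val : ℝ) ≤ x)
    (h : (E.size : ℝ) < c * Real.log E.val) : E.size ≤ ⌊c * Real.log x⌋₊ := by
  refine Nat.le_floor (h.le.trans ?_)
  have hlog := Real.log_le_log (Nat.cast_pos.mpr E.val_pos) hx
  exact mul_le_mul_of_nonneg_left hlog (pos_of_size_lt_mul_log h).le

end ShortFormula

end ExpFormula

lemma pow_floor_mul_log_le_rpow {b c x : ℝ} (hb : 1 ≤ b) (hc : 0 ≤ c) (hx : 1 ≤ x) :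
    b ^ ⌊c * Real.log x⌋₊ ≤ x ^ (c * Real.log b) := by
  have hb0 : 0 < b := by linarith
  calc b ^ ⌊c * Real.log x⌋₊ = b ^ (⌊c * Real.log x⌋₊ : ℝ) := (Real.rpow_natCast _ _).symm
    _ ≤ b ^ (c * Real.log x) :=
      Real.rpow_le_rpow_of_exponent_le hb
        (Nat.floor_le (mul_nonneg hc (Real.log_nonneg hx)))
    _ = x ^ (c * Real.log b) := by
      rw [Real.rpow_def_of_pos hb0, Real.rpow_def_of_pos (by linarith)]
      ring_nf

theorem stmt9_general (ε : ℝ) :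
    ∃ C : ℝ, ∀ x : ℝ, 2 ≤ x →
      ({n : ℕ | 1 ≤ n ∧ (n : ℝ) ≤ x ∧ ∃ E : ExpFormula, E.Valid ∧ E.val = n ∧
          (E.size : ℝ) < (1 - ε) / Real.log 4 * Real.log n}.ncard : ℝ)
        ≤ C * x ^ (1 - ε) := by
  refine ⟨1, fun x hx => ?_⟩
  set c := (1 - ε) / Real.log 4
  set S := {n : ℕ | 1 ≤ n ∧ (n : ℝ) ≤ x ∧ ∃ E : ExpFormula, E.Valid ∧ E.val = n ∧
    (E.size : ℝ) < c * Real.log n}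
  rcases S.eq_empty_or_nonempty with hS | ⟨_, -, -, E, -, rfl, hE⟩
  · rw [hS, Set.ncard_empty, Nat.cast_zero]
    positivity
  have hsub : S ⊆ ExpFormula.val '' {E : ExpFormula | E.size ≤ ⌊c * Real.log x⌋₊} := by
    rintro _ ⟨-, hnx, E, -, rfl, hE⟩
    exact ⟨E, ExpFormula.size_le_floor_of_size_lt_mul_log hnx hE, rfl⟩
  have hc : c * Real.log 4 = 1 - ε := div_mul_cancel₀ _ (Real.log_pos (by norm_num)).ne'
  calc (S.ncard : ℝ) ≤ 4 ^ ⌊c * Real.log x⌋₊ := by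
        exact_mod_cast ExpFormula.ncard_le_of_subset_image_val hsub
    _ ≤ x ^ (c * Real.log 4) :=
        pow_floor_mul_log_le_rpow (by norm_num)
          (ExpFormula.pos_of_size_lt_mul_log hE).le (by linarith)
    _ = 1 * x ^ (1 - ε) := by rw [hc, one_mul]

/-- The number of `n ≤ x` admitting an arithmetic exponential formula of length
less than `(1-ε)/log 4 · log n` is `O(x^{1-ε})`. In particular, for almost all
`n` the shortest such formula has length at least `log n / log 4`. -/
theorem stmt9 (ε : ℝ) (hε : 0 < ε) :
    ∃ C : ℝ, ∀ x : ℝ, 2 ≤ x →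
      ({n : ℕ | 1 ≤ n ∧ (n : ℝ) ≤ x ∧ ∃ E : ExpFormula, E.Valid ∧ E.val = n ∧
          (E.size : ℝ) < (1 - ε) / Real.log 4 * Real.log n}.ncard : ℝ)
        ≤ C * x ^ (1 - ε) :=
  stmt9_general ε
end

section
/- For every ε > 0 and for almost all positive integers n (i.e., for all n ≤ x with at most o(x) exceptions as x → ∞), the length of the Goodstein encoding satisfies S_FCF(n) ≥ (1/(4(log 2)²) - ε) · log n · log log n. -/
/-!
For `n` uniform in `[0, 2^L)` the bits are independent fair coins, so by Chebyshev's inequality,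
for any set `P` of positions, all but `2^L / (4 δ² #P)` of these `n` have at least `(1/2 - δ) #P`
ones on `P`. Applied to the positions `[0, log₂ L]`, this shows that all but `δ L` of the `j < L`
have `s2 j ≥ (1/2 - δ) log₂ L`; applied to the set `P` of the remaining positions `j ≥ 2`, it shows
that almost every `n < 2^L` has at least `(1/2 - δ)(1 - 2δ) L` ones on `P`. Since
`S n ≥ ∑ s2 j` over these ones, such `n` satisfy `S n ≥ (1 - 2δ)³/4 · L log₂ L`, which beats
`(1/(4 (log 2)²) - ε) log n log log n` once `δ` is small. Counting over dyadic blocks `[0, 2^L)`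
gives the `o(x)` bound.
-/

/-- `s2 n` is the number of ones in the binary expansion of `n`. -/
def s2 (n : ℕ) : ℕ := (Nat.digits 2 n).sum

open Finset Filter Real

def bitCount (P : Finset ℕ) (n : ℕ) : ℕ := #(P.filter (n.testBit ·))

lemma bitCount_range_eq_s2 {L n : ℕ} (h : n < 2 ^ L) : bitCount (range L) n = s2 n := by
  induction L generalizing n with
  | zero => simp_all [s2, bitCount]
  | succ L ih =>
    rcases Nat.eq_zero_or_pos n with rfl | hn
    · simp [s2, bitCount]
    have hs2 : s2 n = n % 2 + s2 (n / 2) := by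
      simp [s2, Nat.digits_def' (by norm_num : 1 < 2) hn]
    rw [hs2, ← ih (by rw [pow_succ] at h; omega), bitCount, bitCount, card_filter, card_filter,
      sum_range_succ']
    simp only [Nat.testBit_succ, Nat.testBit_zero]
    rcases Nat.mod_two_eq_zero_or_one n with h' | h' <;> simp [h', add_comm]

noncomputable def bitSign (j n : ℕ) : ℝ := if n.testBit j then 1 / 2 else -1 / 2

lemma bitSign_mul_self (j n : ℕ) : bitSign j n * bitSign j n = 1 / 4 := by
  unfold bitSign; split_ifs <;> norm_num

lemma bitSign_xor_two_pow_of_ne {j k : ℕ} (n : ℕ) (hjk : j ≠ k) :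
    bitSign j (n ^^^ 2 ^ k) = bitSign j n := by
  simp [bitSign, Nat.testBit_xor, Nat.testBit_two_pow_of_ne hjk.symm]

lemma bitSign_xor_two_pow_self (k n : ℕ) : bitSign k (n ^^^ 2 ^ k) = -bitSign k n := by
  unfold bitSign
  rw [Nat.testBit_xor, Nat.testBit_two_pow_self]
  cases n.testBit k <;> norm_num

lemma logb_two_natCast_nonneg (L : ℕ) : 0 ≤ logb 2 L :=
  div_nonneg (log_natCast_nonneg L) (log_nonneg one_le_two)

lemma sum_bitSign_eq (P : Finset ℕ) (n : ℕ) :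
    ∑ j ∈ P, bitSign j n = bitCount P n - #P / 2 := by
  have h (j : ℕ) : bitSign j n = (if n.testBit j then 1 else 0) - 1 / 2 := by
    unfold bitSign; split_ifs <;> norm_num
  simp only [bitCount, h, sum_sub_distrib, sum_boole, sum_const, nsmul_eq_mul]
  ring

/-- Distinct bits are uncorrelated: flipping bit `k` is an involution of `[0, 2^L)` that changes
the sign of the product. -/
lemma sum_bitSign_mul_bitSign_of_ne {L j k : ℕ} (hk : k < L) (hjk : j ≠ k) :
    ∑ n ∈ range (2 ^ L), bitSign j n * bitSign k n = 0 := by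
  refine sum_involution (fun n _ => n ^^^ 2 ^ k) (fun n _ => ?_) (fun n _ _ => by simp)
    (fun n hn => ?_) (fun n _ => xor_cancel_right _ _)
  · rw [bitSign_xor_two_pow_of_ne n hjk, bitSign_xor_two_pow_self]; ring
  · rw [mem_range] at hn ⊢
    exact Nat.xor_lt_two_pow hn (Nat.pow_lt_pow_right (by norm_num) hk)

lemma sum_sq_sum_bitSign {L : ℕ} {P : Finset ℕ} (hP : P ⊆ range L) :
    ∑ n ∈ range (2 ^ L), (∑ j ∈ P, bitSign j n) ^ 2 = 2 ^ L * #P / 4 := by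
  have hdiag (j k : ℕ) (hk : k ∈ P) :
      ∑ n ∈ range (2 ^ L), bitSign j n * bitSign k n = if j = k then 2 ^ L / 4 else 0 := by
    split_ifs with hjk
    · simp [hjk, bitSign_mul_self]; ring
    · exact sum_bitSign_mul_bitSign_of_ne (mem_range.mp (hP hk)) hjk
  calc ∑ n ∈ range (2 ^ L), (∑ j ∈ P, bitSign j n) ^ 2
      = ∑ j ∈ P, ∑ k ∈ P, ∑ n ∈ range (2 ^ L), bitSign j n * bitSign k n := by
        simp_rw [sq, sum_mul_sum]
        rw [sum_comm]
        exact sum_congr rfl fun j _ => sum_comm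
    _ = ∑ j ∈ P, (2 : ℝ) ^ L / 4 := sum_congr rfl fun j hj => by
        rw [sum_congr rfl (hdiag j), sum_ite_eq, if_pos hj]
    _ = 2 ^ L * #P / 4 := by rw [sum_const, nsmul_eq_mul]; ring

lemma card_bitCount_lt_mul_le {L : ℕ} {P : Finset ℕ} (hP : P ⊆ range L) {δ : ℝ} (hδ : 0 < δ) :
    (#((range (2 ^ L)).filter fun n => (bitCount P n : ℝ) < (1 / 2 - δ) * #P) : ℝ)
        * (4 * δ ^ 2 * #P) ≤ 2 ^ L := by
  set bad := (range (2 ^ L)).filter fun n => (bitCount P n : ℝ) < (1 / 2 - δ) * #P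
  have hdev (n : ℕ) (hn : n ∈ bad) : (δ * #P) ^ 2 ≤ (∑ j ∈ P, bitSign j n) ^ 2 := by
    have := (mem_filter.mp hn).2
    rw [sum_bitSign_eq]
    nlinarith [mul_nonneg hδ.le (#P).cast_nonneg]
  have hsecond : #bad * (δ * #P) ^ 2 ≤ 2 ^ L * #P / 4 := calc
    _ = ∑ n ∈ bad, (δ * #P) ^ 2 := by rw [sum_const, nsmul_eq_mul]
    _ ≤ ∑ n ∈ bad, (∑ j ∈ P, bitSign j n) ^ 2 := sum_le_sum hdev
    _ ≤ ∑ n ∈ range (2 ^ L), (∑ j ∈ P, bitSign j n) ^ 2 :=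
      sum_le_sum_of_subset_of_nonneg (filter_subset _ _) fun _ _ _ => sq_nonneg _
    _ = _ := sum_sq_sum_bitSign hP
  rcases (#P).eq_zero_or_pos with hP0 | hP0
  · simp [hP0]
  · have : (0 : ℝ) < #P := by exact_mod_cast hP0
    refine le_of_mul_le_mul_right ?_ this
    linarith

lemma eventually_card_s2_lt_le {δ : ℝ} (hδ : 0 < δ) (hδ' : δ ≤ 1 / 2) :
    ∀ᶠ L : ℕ in atTop,
      (#((range L).filter fun j => (s2 j : ℝ) < (1 / 2 - δ) * logb 2 L) : ℝ) ≤ δ * L := by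
  obtain ⟨K, hK⟩ := exists_nat_ge (1 / (2 * δ ^ 3))
  filter_upwards [eventually_ge_atTop (2 ^ K)] with L hL
  set m := Nat.log 2 L + 1
  have hL0 : L ≠ 0 := (Nat.two_pow_pos K).trans_le hL |>.ne'
  have hLm : L < 2 ^ m := Nat.lt_pow_succ_log_self one_lt_two L
  have hmL : 2 ^ m ≤ 2 * L := by
    have := Nat.pow_log_le_self 2 hL0
    rw [pow_succ]; omega
  have hKm : K ≤ m := Nat.le_succ_of_le (Nat.le_log_of_pow_le one_lt_two hL)
  have hlogb : logb 2 L ≤ m := by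
    rw [logb_le_iff_le_rpow one_lt_two (by positivity), rpow_natCast]
    exact_mod_cast hLm.le
  have hsub : (range L).filter (fun j => (s2 j : ℝ) < (1 / 2 - δ) * logb 2 L) ⊆
      (range (2 ^ m)).filter fun j => (bitCount (range m) j : ℝ) < (1 / 2 - δ) * #(range m) := by
    intro j hj
    simp only [mem_filter, mem_range] at hj ⊢
    refine ⟨hj.1.trans hLm, ?_⟩
    rw [bitCount_range_eq_s2 (hj.1.trans hLm), card_range]
    exact hj.2.trans_le (mul_le_mul_of_nonneg_left hlogb (by linarith))
  have hm : (0 : ℝ) < 4 * δ ^ 2 * #(range m) := by rw [card_range]; positivity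
  refine le_of_mul_le_mul_right ?_ hm
  calc _ ≤ (#((range (2 ^ m)).filter fun j =>
          (bitCount (range m) j : ℝ) < (1 / 2 - δ) * #(range m)) : ℝ)
          * (4 * δ ^ 2 * #(range m)) :=
        mul_le_mul_of_nonneg_right (by exact_mod_cast card_le_card hsub) hm.le
    _ ≤ 2 ^ m := card_bitCount_lt_mul_le subset_rfl hδ
    _ ≤ 2 * L := by exact_mod_cast hmL
    _ ≤ δ * L * (4 * δ ^ 2 * #(range m)) := by
      rw [div_le_iff₀ (by positivity)] at hK
      have hm' : 1 ≤ (m : ℝ) * (2 * δ ^ 3) :=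
        hK.trans (mul_le_mul_of_nonneg_right (by exact_mod_cast hKm) (by positivity))
      rw [card_range]
      nlinarith [(L.cast_nonneg : (0 : ℝ) ≤ L)]

def IsGoodsteinLength (S : ℕ → ℕ) : Prop :=
  ∀ n : ℕ, 1 ≤ n → S n = s2 n - 1 +
    ∑ j ∈ (range n).filter (fun j => n.testBit j),
      (if j = 0 then 1 else if j = 1 then 3 else 4 + S j)

namespace IsGoodsteinLength

variable {S : ℕ → ℕ}

lemma sum_s2_le (hS : IsGoodsteinLength S) {n : ℕ} (hn : 1 ≤ n) {Q : Finset ℕ}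
    (hQ : ∀ j ∈ Q, 2 ≤ j ∧ n.testBit j) : ∑ j ∈ Q, s2 j ≤ S n := by
  have hsub : Q ⊆ (range n).filter (fun j => n.testBit j) := fun j hj =>
    mem_filter.mpr ⟨mem_range.mpr (Nat.lt_two_pow_self.trans_le
      (Nat.ge_two_pow_of_testBit (hQ j hj).2)), (hQ j hj).2⟩
  calc ∑ j ∈ Q, s2 j ≤ ∑ j ∈ Q, (if j = 0 then 1 else if j = 1 then 3 else 4 + S j) := by
        refine sum_le_sum fun j hj => ?_
        obtain ⟨hj2, -⟩ := hQ j hj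
        have := hS j (by omega)
        rw [if_neg (by omega), if_neg (by omega)]
        omega
    _ ≤ ∑ j ∈ (range n).filter (fun j => n.testBit j),
          (if j = 0 then 1 else if j = 1 then 3 else 4 + S j) := sum_le_sum_of_subset hsub
    _ ≤ S n := by rw [hS n hn]; omega

lemma bitCount_mul_le (hS : IsGoodsteinLength S) {n : ℕ} (hn : 1 ≤ n) {P : Finset ℕ} {τ : ℝ}
    (hP : ∀ j ∈ P, 2 ≤ j ∧ τ ≤ s2 j) : (bitCount P n : ℝ) * τ ≤ S n := by
  set Q := P.filter (n.testBit ·)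
  calc (bitCount P n : ℝ) * τ = #Q • τ := by rw [nsmul_eq_mul]; rfl
    _ ≤ ∑ j ∈ Q, (s2 j : ℝ) := card_nsmul_le_sum _ _ _ fun j hj =>
        (hP j (mem_filter.mp hj).1).2
    _ ≤ S n := by
      exact_mod_cast hS.sum_s2_le hn fun j hj =>
        ⟨(hP j (mem_filter.mp hj).1).1, (mem_filter.mp hj).2⟩

lemma card_lt_mul_le (hS : IsGoodsteinLength S) {δ : ℝ} (hδ : 0 < δ) (hδ' : δ ≤ 1 / 2) {L : ℕ}
    (hlow : (#((range L).filter fun j => (s2 j : ℝ) < (1 / 2 - δ) * logb 2 L) : ℝ) ≤ δ * L)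
    (hL : 2 ≤ δ * L) :
    (#((range (2 ^ L)).filter fun n => 1 ≤ n ∧ (S n : ℝ) < (1 - 2 * δ) ^ 3 / 4 * (L * logb 2 L))
        : ℝ) * (4 * δ ^ 2 * ((1 - 2 * δ) * L)) ≤ 2 ^ L := by
  set τ := (1 / 2 - δ) * logb 2 L
  set P := (range L).filter fun j => 2 ≤ j ∧ τ ≤ s2 j
  have hτ : 0 ≤ τ := mul_nonneg (by linarith) (logb_two_natCast_nonneg L)
  have hP : (1 - 2 * δ) * L ≤ #P := by
    have hcover : range L ⊆ (P ∪ range 2) ∪ (range L).filter fun j => (s2 j : ℝ) < τ := by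
      intro j hj
      simp only [P, mem_union, mem_filter, mem_range] at hj ⊢
      by_cases h2 : j < 2
      · exact Or.inl (Or.inr h2)
      · by_cases hs : τ ≤ s2 j
        · exact Or.inl (Or.inl ⟨hj, by omega, hs⟩)
        · exact Or.inr ⟨hj, not_le.mp hs⟩
    have hcard := card_le_card hcover
    have h₁ := card_union_le (P ∪ range 2) ((range L).filter fun j => (s2 j : ℝ) < τ)
    have h₂ := card_union_le P (range 2)
    rw [card_range] at hcard h₂
    have : (L : ℝ) ≤ #P + 2 + #((range L).filter fun j => (s2 j : ℝ) < τ) := by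
      exact_mod_cast hcard.trans (h₁.trans (by omega))
    linarith
  have hsub : ((range (2 ^ L)).filter fun n =>
      1 ≤ n ∧ (S n : ℝ) < (1 - 2 * δ) ^ 3 / 4 * (L * logb 2 L)) ⊆
      (range (2 ^ L)).filter fun n => (bitCount P n : ℝ) < (1 / 2 - δ) * #P := by
    intro n hn
    simp only [mem_filter] at hn ⊢
    refine ⟨hn.1, not_le.mp fun hbits => hn.2.2.not_ge ?_⟩
    calc (1 - 2 * δ) ^ 3 / 4 * (L * logb 2 L) = (1 / 2 - δ) * ((1 - 2 * δ) * L) * τ := by ring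
      _ ≤ (1 / 2 - δ) * #P * τ := by gcongr
      _ ≤ bitCount P n * τ := by gcongr
      _ ≤ S n := hS.bitCount_mul_le hn.2.1 fun j hj => (mem_filter.mp hj).2
  calc _ ≤ (#((range (2 ^ L)).filter fun n => (bitCount P n : ℝ) < (1 / 2 - δ) * #P) : ℝ)
        * (4 * δ ^ 2 * #P) := by
        have : 0 ≤ 1 - 2 * δ := by linarith
        exact mul_le_mul (by exact_mod_cast card_le_card hsub) (by gcongr) (by positivity)
          (Nat.cast_nonneg _)
    _ ≤ 2 ^ L := card_bitCount_lt_mul_le (filter_subset _ _) hδ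

lemma eventually_card_lt_le (hS : IsGoodsteinLength S) {κ : ℝ} (hκ : κ < 1 / 4) {c : ℝ}
    (hc : 0 < c) :
    ∀ᶠ L : ℕ in atTop,
      (#((range (2 ^ L)).filter fun n => 1 ≤ n ∧ (S n : ℝ) < κ * (L * logb 2 L)) : ℝ)
        ≤ c * 2 ^ L := by
  set δ := min ((1 - 4 * κ) / 6) (1 / 4)
  have hδ : 0 < δ := lt_min (by linarith) (by norm_num)
  have hδ' : δ ≤ 1 / 4 := min_le_right _ _
  have hκδ : κ ≤ (1 - 2 * δ) ^ 3 / 4 := by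
    have := min_le_left ((1 - 4 * κ) / 6) (1 / 4)
    nlinarith [sq_nonneg δ, mul_pos hδ hδ]
  have hA : 0 < c * (4 * δ ^ 2 * (1 - 2 * δ)) := by
    have : 0 < 1 - 2 * δ := by linarith
    positivity
  filter_upwards [eventually_card_s2_lt_le hδ (by linarith),
    tendsto_natCast_atTop_atTop.eventually_ge_atTop (2 / δ),
    tendsto_natCast_atTop_atTop.eventually_ge_atTop (1 / (c * (4 * δ ^ 2 * (1 - 2 * δ))))]
    with L hlow hL hLc
  rw [div_le_iff₀ hδ, mul_comm] at hL
  rw [div_le_iff₀ hA] at hLc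
  have hmono : ((range (2 ^ L)).filter fun n => 1 ≤ n ∧ (S n : ℝ) < κ * (L * logb 2 L)) ⊆
      (range (2 ^ L)).filter fun n =>
        1 ≤ n ∧ (S n : ℝ) < (1 - 2 * δ) ^ 3 / 4 * (L * logb 2 L) := by
    intro n hn
    simp only [mem_filter] at hn ⊢
    exact ⟨hn.1, hn.2.1, hn.2.2.trans_le (mul_le_mul_of_nonneg_right hκδ
      (mul_nonneg L.cast_nonneg (logb_two_natCast_nonneg L)))⟩
  set bad := (range (2 ^ L)).filter fun n =>
    1 ≤ n ∧ (S n : ℝ) < (1 - 2 * δ) ^ 3 / 4 * (L * logb 2 L)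
  calc _ ≤ (#bad : ℝ) := by exact_mod_cast card_le_card hmono
    _ ≤ #bad * (L * (c * (4 * δ ^ 2 * (1 - 2 * δ)))) :=
      le_mul_of_one_le_right (Nat.cast_nonneg _) hLc
    _ = c * (#bad * (4 * δ ^ 2 * ((1 - 2 * δ) * L))) := by ring
    _ ≤ c * 2 ^ L := by gcongr; exact hS.card_lt_mul_le hδ (by linarith) hlow hL

end IsGoodsteinLength

lemma isLittleO_card_filter_Icc_of_eventually_card_le (p : ℕ → Prop) [DecidablePred p]
    (h : ∀ c > 0, ∀ᶠ L : ℕ in atTop, (#((range (2 ^ L)).filter p) : ℝ) ≤ c * 2 ^ L) :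
    (fun x : ℝ => (#((Icc 1 ⌊x⌋₊).filter p) : ℝ)) =o[atTop] fun x => x := by
  refine Asymptotics.isLittleO_iff.mpr fun c hc => ?_
  obtain ⟨L₀, hL₀⟩ := eventually_atTop.mp (h (c / 2) (half_pos hc))
  filter_upwards [eventually_ge_atTop ((2 : ℝ) ^ L₀)] with x hx
  have hx0 : 0 ≤ x := (pow_nonneg zero_le_two _).trans hx
  set M := ⌊x⌋₊
  set L := Nat.log 2 M + 1
  have hM : 2 ^ L₀ ≤ M := Nat.le_floor (by exact_mod_cast hx)
  have hM0 : M ≠ 0 := (Nat.two_pow_pos L₀).trans_le hM |>.ne'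
  have hsub : Icc 1 M ⊆ range (2 ^ L) := fun n hn =>
    mem_range.mpr ((mem_Icc.mp hn).2.trans_lt (Nat.lt_pow_succ_log_self one_lt_two M))
  have h2L : (2 : ℝ) ^ L ≤ 2 * x := by
    have : 2 ^ L ≤ 2 * M := by
      have := Nat.pow_log_le_self 2 hM0
      rw [pow_succ]; omega
    calc (2 : ℝ) ^ L ≤ 2 * M := by exact_mod_cast this
      _ ≤ 2 * x := by gcongr; exact Nat.floor_le hx0
  rw [Real.norm_of_nonneg (Nat.cast_nonneg _), Real.norm_of_nonneg hx0]
  calc (#((Icc 1 M).filter p) : ℝ) ≤ #((range (2 ^ L)).filter p) := by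
        exact_mod_cast card_le_card (filter_subset_filter _ hsub)
    _ ≤ c / 2 * 2 ^ L := hL₀ L (Nat.le_succ_of_le (Nat.le_log_of_pow_le one_lt_two hM))
    _ ≤ c * x := by nlinarith

lemma one_le_log_natCast {n : ℕ} (hn : 3 ≤ n) : 1 ≤ log n := by
  rw [le_log_iff_exp_le (by positivity)]
  have : (3 : ℝ) ≤ n := by exact_mod_cast hn
  linarith [exp_one_lt_d9]

lemma mul_log_mul_log_log_le (t : ℝ) {n L : ℕ} (hn : 3 ≤ n) (hnL : n < 2 ^ L) :
    t * log n * log (log n) ≤ max t 0 * log 2 ^ 2 * (L * logb 2 L) := by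
  have hl2 : 0 < log 2 := log_pos one_lt_two
  have hlogn := one_le_log_natCast hn
  have hnL' : log n ≤ L * log 2 := by
    rw [← log_pow]
    exact log_le_log (by positivity) (by exact_mod_cast hnL.le)
  have hLn : log (log n) ≤ log L :=
    log_le_log (by linarith) (hnL'.trans (mul_le_of_le_one_right L.cast_nonneg
      (by linarith [log_two_lt_d9])))
  calc t * log n * log (log n) ≤ max t 0 * (log n * log (log n)) := by
        rw [mul_assoc]
        exact mul_le_mul_of_nonneg_right (le_max_left _ _)
          (mul_nonneg (by linarith) (log_nonneg hlogn))
    _ ≤ max t 0 * ((L * log 2) * log L) := by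
        have := log_nonneg hlogn
        gcongr
    _ = max t 0 * log 2 ^ 2 * (L * logb 2 L) := by rw [logb]; field_simp

lemma max_mul_log_two_sq_lt {ε : ℝ} (hε : 0 < ε) :
    max (1 / (4 * log 2 ^ 2) - ε) 0 * log 2 ^ 2 < 1 / 4 := by
  have hl2 : 0 < log 2 := log_pos one_lt_two
  rcases le_total (1 / (4 * log 2 ^ 2) - ε) 0 with ht | ht
  · rw [max_eq_right ht]; norm_num
  · calc max (1 / (4 * log 2 ^ 2) - ε) 0 * log 2 ^ 2 = 1 / 4 - ε * log 2 ^ 2 := by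
          rw [max_eq_left ht, sub_mul]; field_simp
      _ < 1 / 4 := sub_lt_self _ (by positivity)

theorem stmt13_general (S : ℕ → ℕ)
    (hS : ∀ n : ℕ, 1 ≤ n → S n = s2 n - 1 +
      ∑ j ∈ (Finset.range n).filter (fun j => n.testBit j),
        (if j = 0 then 1 else if j = 1 then 3 else 4 + S j))
    (ε : ℝ) (hε : 0 < ε) :
    (fun x : ℝ => (((Finset.Icc 1 ⌊x⌋₊).filter
        (fun n => (S n : ℝ) <
          (1 / (4 * Real.log 2 ^ 2) - ε) * Real.log n * Real.log (Real.log n))).card : ℝ))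
      =o[Filter.atTop] fun x : ℝ => x := by
  set t := 1 / (4 * log 2 ^ 2) - ε
  refine isLittleO_card_filter_Icc_of_eventually_card_le _ fun c hc => ?_
  filter_upwards [IsGoodsteinLength.eventually_card_lt_le hS (max_mul_log_two_sq_lt hε)
      (half_pos hc),
    (tendsto_pow_atTop_atTop_of_one_lt one_lt_two).eventually_ge_atTop (6 / c)] with L hL hL6
  have hsub : ((range (2 ^ L)).filter fun n => (S n : ℝ) < t * log n * log (log n)) ⊆
      range 3 ∪ (range (2 ^ L)).filter fun n =>
        1 ≤ n ∧ (S n : ℝ) < max t 0 * log 2 ^ 2 * (L * logb 2 L) := by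
    intro n hn
    simp only [mem_union, mem_filter, mem_range] at hn ⊢
    exact (lt_or_ge n 3).imp id fun h3 =>
      ⟨hn.1, by omega, hn.2.trans_le (mul_log_mul_log_log_le t h3 hn.1)⟩
  rw [div_le_iff₀ hc] at hL6
  calc _ ≤ (#(range 3) + #((range (2 ^ L)).filter fun n =>
          1 ≤ n ∧ (S n : ℝ) < max t 0 * log 2 ^ 2 * (L * logb 2 L)) : ℝ) := by
        exact_mod_cast (card_le_card hsub).trans (card_union_le _ _)
    _ ≤ c / 2 * 2 ^ L + c / 2 * 2 ^ L := by rw [card_range]; push_cast; linarith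
    _ = c * 2 ^ L := by ring

/-- Let `S` be the length of the Goodstein (first canonical form) encoding,
as specified by its defining recursion. For every `ε > 0`, for almost all
positive integers `n` (with `o(x)` exceptions up to `x`),
`S n ≥ (1/(4 (log 2)²) - ε) · log n · log log n`. -/
theorem stmt13 (S : ℕ → ℕ) (hS0 : S 0 = 0)
    (hS : ∀ n : ℕ, 1 ≤ n → S n = s2 n - 1 +
      ∑ j ∈ (Finset.range n).filter (fun j => n.testBit j),
        (if j = 0 then 1 else if j = 1 then 3 else 4 + S j))
    (ε : ℝ) (hε : 0 < ε) :
    (fun x : ℝ => (((Finset.Icc 1 ⌊x⌋₊).filter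
        (fun n => (S n : ℝ) <
          (1 / (4 * Real.log 2 ^ 2) - ε) * Real.log n * Real.log (Real.log n))).card : ℝ))
      =o[Filter.atTop] fun x : ℝ => x :=
  stmt13_general S hS ε hε
end

section
/- Let t(n) denote the number of occurrences of the symbol 2 in the second canonical form of n (with each (1+1) abbreviated as 2). Then n ≥ 2^{t(n)} for every integer n ≥ 2; equivalently t(n) ≤ log n / log 2. -/
/-! Strong induction on `n`. A factor `p ^ b` of a composite `n` contributes
`2 ^ (t p + t b) ≤ p * b ≤ p ^ b`, and an odd prime `p = 1 + 2 ^ s * m` gives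
`2 ^ t p ≤ 2 * s * m ≤ 2 ^ s * m < p`; both rest on `a * b ≤ a ^ b`. -/

lemma two_pow_ite_le {f : ℕ → ℕ} {b : ℕ} (hb : 1 ≤ b) (hf : 2 ≤ b → 2 ^ f b ≤ b) :
    2 ^ (if 2 ≤ b then f b else 0) ≤ b := by
  split_ifs with h
  · exact hf h
  · simpa using hb

lemma two_pow_add_ite_le_pow {f : ℕ → ℕ} {a p b : ℕ} (hp : 2 ≤ p) (ha : 2 ^ a ≤ p)
    (hb : 1 ≤ b) (hf : 2 ≤ b → 2 ^ f b ≤ b) :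
    2 ^ (a + if 2 ≤ b then f b else 0) ≤ p ^ b :=
  calc 2 ^ (a + if 2 ≤ b then f b else 0) = 2 ^ a * 2 ^ (if 2 ≤ b then f b else 0) :=
        pow_add _ _ _
    _ ≤ p * b := Nat.mul_le_mul ha (two_pow_ite_le hb hf)
    _ ≤ p ^ b := Nat.mul_le_pow (by omega) b

section

variable {t : ℕ → ℕ}

lemma two_pow_le_of_prime_of_odd {p : ℕ} (hp : p.Prime) (hodd : p % 2 = 1)
    (htp : t p = 1
        + (if 2 ≤ (p - 1).factorization 2 then t ((p - 1).factorization 2) else 0)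
        + (if 2 ≤ (p - 1) / 2 ^ ((p - 1).factorization 2) then
            t ((p - 1) / 2 ^ ((p - 1).factorization 2)) else 0))
    (IH : ∀ m < p, 2 ≤ m → 2 ^ t m ≤ m) : 2 ^ t p ≤ p := by
  set s := (p - 1).factorization 2
  set m := (p - 1) / 2 ^ s
  have hp1 : p - 1 ≠ 0 := by have := hp.two_le; omega
  have hs : 1 ≤ s := Nat.Prime.factorization_pos_of_dvd Nat.prime_two hp1 (by omega)
  have hm : 1 ≤ m := Nat.ordCompl_pos 2 hp1
  have hslt : s < p - 1 := Nat.factorization_lt 2 hp1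
  have hmle : m ≤ p - 1 := Nat.div_le_self _ _
  have hsplit : 2 ^ s * m = p - 1 := Nat.ordProj_mul_ordCompl_eq_self _ _
  rw [htp, pow_add]
  calc 2 ^ (1 + if 2 ≤ s then t s else 0) * 2 ^ (if 2 ≤ m then t m else 0)
      ≤ 2 ^ s * m :=
        Nat.mul_le_mul (two_pow_add_ite_le_pow le_rfl le_rfl hs (IH s (by omega)))
          (two_pow_ite_le hm (IH m (by omega)))
    _ ≤ p := by omega

lemma two_pow_le_of_not_prime {n : ℕ} (hn : 2 ≤ n) (hnp : ¬ n.Prime)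
    (htc : t n = ∑ p ∈ n.primeFactors,
        (t p + if 2 ≤ n.factorization p then t (n.factorization p) else 0))
    (IH : ∀ m < n, 2 ≤ m → 2 ^ t m ≤ m) : 2 ^ t n ≤ n := by
  have hn0 : n ≠ 0 := by omega
  rw [htc, ← Finset.prod_pow_eq_pow_sum]
  calc ∏ p ∈ n.primeFactors,
        2 ^ (t p + if 2 ≤ n.factorization p then t (n.factorization p) else 0)
      ≤ ∏ p ∈ n.primeFactors, p ^ n.factorization p := by
        refine Finset.prod_le_prod' fun p hpn => ?_
        have hpp : p.Prime := Nat.prime_of_mem_primeFactors hpn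
        have hpdvd : p ∣ n := Nat.dvd_of_mem_primeFactors hpn
        have hplt : p < n :=
          (Nat.le_of_dvd (by omega) hpdvd).lt_of_ne fun h => hnp (h ▸ hpp)
        exact two_pow_add_ite_le_pow hpp.two_le (IH p hplt hpp.two_le)
          (hpp.factorization_pos_of_dvd hn0 hpdvd) (IH _ (Nat.factorization_lt p hn0))
    _ = n := Nat.prod_factorization_pow_eq_self hn0

end

/-- Let `t n` be the number of occurrences of the symbol `2` (i.e. of `(1+1)`)
in the second canonical form of `n`, specified by its recursion: `t 2 = 1`;
for an odd prime `p` with `p - 1 = 2^s · m` (`m` odd),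
`t p = 1 + t s + t m` (the terms `t s`, `t m` appearing only when `s ≥ 2`,
resp. `m ≥ 2`); and for composite `n = p₁⋯p_k q₁^{b₁}⋯q_h^{b_h}` (`b_j ≥ 2`),
`t n = ∑ t(pᵢ) + ∑ (t(qⱼ) + t(bⱼ))`. Then `n ≥ 2^{t n}` for every `n ≥ 2`;
equivalently `t n ≤ log n / log 2`. -/
theorem stmt14 (t : ℕ → ℕ) (ht2 : t 2 = 1)
    (htp : ∀ p : ℕ, p.Prime → p % 2 = 1 →
      t p = 1
        + (if 2 ≤ (p - 1).factorization 2 then t ((p - 1).factorization 2) else 0)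
        + (if 2 ≤ (p - 1) / 2 ^ ((p - 1).factorization 2) then
            t ((p - 1) / 2 ^ ((p - 1).factorization 2)) else 0))
    (htc : ∀ n : ℕ, 2 ≤ n → ¬ n.Prime →
      t n = ∑ p ∈ n.primeFactors,
        (t p + if 2 ≤ n.factorization p then t (n.factorization p) else 0)) :
    ∀ n : ℕ, 2 ≤ n → 2 ^ t n ≤ n := by
  intro n
  induction n using Nat.strong_induction_on with
  | _ n IH =>
    intro hn
    by_cases hp : n.Prime
    · rcases hp.eq_two_or_odd with rfl | hodd
      · simp [ht2]
      · exact two_pow_le_of_prime_of_odd hp hodd (htp n hp hodd) IH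
    · exact two_pow_le_of_not_prime hn hp (htc n hn hp) IH
end

section
/- For every integer n ≥ 2, the length S_SCF(n) of the second canonical form encoding of n satisfies S_SCF(n) ≤ 6·(log n / log 2). In fact S_SCF(n) ≤ 6 t(n) − 1 where t(n) is the number of 2's in the encoding and t(n) ≤ log n / log 2. -/
/-!
Prove `S n + 1 ≤ 6 t n` and `2 ^ t n ≤ n` together by strong induction on `n`.
For an odd prime `p = 1 + 2^s m` we have `S p + 1 = 6 + (1 + S s) + (1 + S m)`, so the one new `2`
pays for six symbols and the induction hypotheses for `s` and `m` pay for the rest; moreover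
`2 ^ t p ≤ 2 s m ≤ 2^s m < p` because `2 s ≤ 2^s`. For a composite `n = ∏ q^b`, the summand of
`S n + 1` belonging to `q^b` is bounded by `6 (t q + t b)` in the same way, and
`2 ^ (t q + t b) ≤ q b ≤ q^b`. The logarithmic bound is `2 ^ t n ≤ n` read through `log`.
-/

theorem Nat.mul_factorization_mul_ordCompl_le {q : ℕ} (hq : q ≠ 1) (n : ℕ) :
    q * (n.factorization q * (n / q ^ n.factorization q)) ≤ n :=
  calc q * (n.factorization q * (n / q ^ n.factorization q))
      = q * n.factorization q * (n / q ^ n.factorization q) := (Nat.mul_assoc ..).symm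
    _ ≤ q ^ n.factorization q * (n / q ^ n.factorization q) :=
        Nat.mul_le_mul_right _ (Nat.mul_le_pow hq _)
    _ = n := Nat.ordProj_mul_ordCompl_eq_self n q

/-- `S n + 1 ≤ 6 t n` is `S n ≤ 6 t n - 1` without truncated subtraction; it also forces `1 ≤ t n`. -/
def SCFBound (t S : ℕ → ℕ) (n : ℕ) : Prop :=
  S n + 1 ≤ 6 * t n ∧ 2 ^ t n ≤ n

section

variable {t S : ℕ → ℕ}

theorem SCFBound.ite_bounds {k : ℕ} (h : 2 ≤ k → SCFBound t S k) (hk : 1 ≤ k) :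
    (if 2 ≤ k then 1 + S k else 0) ≤ 6 * (if 2 ≤ k then t k else 0) ∧
      2 ^ (if 2 ≤ k then t k else 0) ≤ k := by
  split_ifs with hk2
  · obtain ⟨hS, hpow⟩ := h hk2
    exact ⟨by omega, hpow⟩
  · simpa using hk

theorem SCFBound.log_bound {n : ℕ} (h : SCFBound t S n) :
    (S n : ℝ) ≤ 6 * Real.log n / Real.log 2 := by
  obtain ⟨hS, hpow⟩ := h
  have hlog : (t n : ℝ) * Real.log 2 ≤ Real.log n := by
    rw [← Real.log_pow]
    exact Real.log_le_log (by positivity) (by exact_mod_cast hpow)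
  rw [mul_div_assoc]
  calc (S n : ℝ) ≤ 6 * t n := by exact_mod_cast (by omega : S n ≤ 6 * t n)
    _ ≤ 6 * (Real.log n / Real.log 2) := by
        gcongr
        rwa [le_div_iff₀ (Real.log_pos one_lt_two)]

theorem scfBound_two (ht2 : t 2 = 1) (hS2 : S 2 = 3) : SCFBound t S 2 := by
  simp [SCFBound, ht2, hS2]

theorem scfBound_of_odd_prime {p s m : ℕ}
    (htp : t p = 1 + (if 2 ≤ s then t s else 0) + (if 2 ≤ m then t m else 0))
    (hSp : S p = 5 + (if 2 ≤ s then 1 + S s else 0) + (if 2 ≤ m then 1 + S m else 0))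
    (hsm : 2 * (s * m) ≤ p) (hs : 1 ≤ s) (hm : 1 ≤ m)
    (ih : ∀ k < p, 2 ≤ k → SCFBound t S k) : SCFBound t S p := by
  have hsp : s < p := by nlinarith
  have hmp : m < p := by nlinarith
  obtain ⟨hSs, hts⟩ := SCFBound.ite_bounds (ih s hsp) hs
  obtain ⟨hSm, htm⟩ := SCFBound.ite_bounds (ih m hmp) hm
  refine ⟨by omega, ?_⟩
  calc 2 ^ t p
      = 2 * (2 ^ (if 2 ≤ s then t s else 0) * 2 ^ (if 2 ≤ m then t m else 0)) := by
        rw [htp, pow_add, pow_add, pow_one, mul_assoc]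
    _ ≤ 2 * (s * m) := Nat.mul_le_mul_left 2 (Nat.mul_le_mul hts htm)
    _ ≤ p := hsm

theorem scfBound_prime_power_term {p a : ℕ} (hp : 2 ≤ p) (ha : 1 ≤ a)
    (ihp : SCFBound t S p) (iha : 2 ≤ a → SCFBound t S a) :
    (if 2 ≤ a then 2 else 1) + S p + (if 2 ≤ a then S a else 0)
        ≤ 6 * (t p + if 2 ≤ a then t a else 0) ∧
      2 ^ (t p + if 2 ≤ a then t a else 0) ≤ p ^ a := by
  obtain ⟨hSp, htp⟩ := ihp
  obtain ⟨hSa, hta⟩ := SCFBound.ite_bounds iha ha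
  constructor
  · split_ifs at hSa hta ⊢ <;> omega
  · calc 2 ^ (t p + if 2 ≤ a then t a else 0)
        = 2 ^ t p * 2 ^ (if 2 ≤ a then t a else 0) := pow_add ..
      _ ≤ p * a := Nat.mul_le_mul htp hta
      _ ≤ p ^ a := Nat.mul_le_pow (by omega) a

theorem scfBound_of_not_prime {n : ℕ} (hn : 2 ≤ n) (hnp : ¬ n.Prime)
    (htn : t n = ∑ p ∈ n.primeFactors,
      (t p + if 2 ≤ n.factorization p then t (n.factorization p) else 0))
    (hSn : S n = (∑ p ∈ n.primeFactors,
      ((if 2 ≤ n.factorization p then 2 else 1) + S p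
        + if 2 ≤ n.factorization p then S (n.factorization p) else 0)) - 1)
    (ih : ∀ k < n, 2 ≤ k → SCFBound t S k) : SCFBound t S n := by
  have hn0 : n ≠ 0 := by omega
  have hterm : ∀ p ∈ n.primeFactors,
      (if 2 ≤ n.factorization p then 2 else 1) + S p
          + (if 2 ≤ n.factorization p then S (n.factorization p) else 0)
        ≤ 6 * (t p + if 2 ≤ n.factorization p then t (n.factorization p) else 0) ∧
      2 ^ (t p + if 2 ≤ n.factorization p then t (n.factorization p) else 0)
        ≤ p ^ n.factorization p := by
    intro p hpmem
    obtain ⟨hp, hpdvd, -⟩ := Nat.mem_primeFactors.mp hpmem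
    have hpn : p < n :=
      (Nat.le_of_dvd (by omega) hpdvd).lt_of_ne fun h => hnp (h ▸ hp)
    exact scfBound_prime_power_term hp.two_le (hp.factorization_pos_of_dvd hn0 hpdvd)
      (ih p hpn hp.two_le) (ih _ (Nat.factorization_lt p hn0))
  constructor
  · obtain ⟨q, hq⟩ := Nat.nonempty_primeFactors.mpr (by omega : 1 < n)
    have hpos : 1 ≤ ∑ p ∈ n.primeFactors,
        ((if 2 ≤ n.factorization p then 2 else 1) + S p
          + if 2 ≤ n.factorization p then S (n.factorization p) else 0) :=
      le_trans (by split_ifs <;> omega)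
        (Finset.single_le_sum (fun _ _ => Nat.zero_le _) hq)
    have hsum := Finset.sum_le_sum fun p hp => (hterm p hp).1
    rw [← Finset.mul_sum] at hsum
    omega
  · rw [htn, ← Finset.prod_pow_eq_pow_sum]
    calc ∏ p ∈ n.primeFactors,
          2 ^ (t p + if 2 ≤ n.factorization p then t (n.factorization p) else 0)
        ≤ ∏ p ∈ n.primeFactors, p ^ n.factorization p :=
          Finset.prod_le_prod' fun p hp => (hterm p hp).2
      _ = n := (Nat.prod_primeFactors_pow_factorization hn0).symm

end

/-- Let `t n` be the number of occurrences of the symbol `2` (i.e. of `(1+1)`)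
and `S n` the length (number of symbols `1`, `+`, `×`, `∧`) of the second
canonical form of `n`, both specified by their defining recursions:
`t 2 = 1`, `S 2 = 3`; for an odd prime `p` with `p - 1 = 2^s · m` (`m` odd),
`t p = 1 + t s + t m` and `S p = 5 + (1 + S s) + (1 + S m)`, where the terms
for `s` (resp. `m`) appear only when `s ≥ 2` (resp. `m ≥ 2`); for composite
`n = p₁⋯p_k q₁^{b₁}⋯q_h^{b_h}` (`b_j ≥ 2`),
`t n = ∑ t(pᵢ) + ∑ (t(qⱼ) + t(bⱼ))` and
`S n = k + 2h - 1 + ∑ S(pᵢ) + ∑ (S(qⱼ) + S(bⱼ))`.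
Then for all `n ≥ 2`: `S n ≤ 6 t n - 1`, `t n ≤ log n / log 2` (i.e.
`2^{t n} ≤ n`), and consequently `S n ≤ 6 log n / log 2`. -/
theorem stmt16 (t S : ℕ → ℕ) (ht2 : t 2 = 1) (hS2 : S 2 = 3)
    (htp : ∀ p : ℕ, p.Prime → p % 2 = 1 →
      t p = 1
        + (if 2 ≤ (p - 1).factorization 2 then t ((p - 1).factorization 2) else 0)
        + (if 2 ≤ (p - 1) / 2 ^ ((p - 1).factorization 2) then
            t ((p - 1) / 2 ^ ((p - 1).factorization 2)) else 0))
    (hSp : ∀ p : ℕ, p.Prime → p % 2 = 1 →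
      S p = 5
        + (if 2 ≤ (p - 1).factorization 2 then 1 + S ((p - 1).factorization 2) else 0)
        + (if 2 ≤ (p - 1) / 2 ^ ((p - 1).factorization 2) then
            1 + S ((p - 1) / 2 ^ ((p - 1).factorization 2)) else 0))
    (htc : ∀ n : ℕ, 2 ≤ n → ¬ n.Prime →
      t n = ∑ p ∈ n.primeFactors,
        (t p + if 2 ≤ n.factorization p then t (n.factorization p) else 0))
    (hSc : ∀ n : ℕ, 2 ≤ n → ¬ n.Prime →
      S n = (∑ p ∈ n.primeFactors,
        ((if 2 ≤ n.factorization p then 2 else 1) + S p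
          + if 2 ≤ n.factorization p then S (n.factorization p) else 0)) - 1) :
    ∀ n : ℕ, 2 ≤ n →
      S n ≤ 6 * t n - 1 ∧ 2 ^ t n ≤ n ∧
        (S n : ℝ) ≤ 6 * Real.log n / Real.log 2 := by
  have hbound : ∀ n, 2 ≤ n → SCFBound t S n := by
    intro n
    induction n using Nat.strong_induction_on with
    | _ n ih =>
      intro hn
      by_cases hn2 : n = 2
      · exact hn2 ▸ scfBound_two ht2 hS2
      by_cases hp : n.Prime
      · have hodd : n % 2 = 1 := Nat.odd_iff.mp (hp.odd_of_ne_two hn2)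
        have hn1 : n - 1 ≠ 0 := by omega
        exact scfBound_of_odd_prime (htp n hp hodd) (hSp n hp hodd)
          ((Nat.mul_factorization_mul_ordCompl_le (by decide) _).trans (Nat.sub_le n 1))
          (Nat.prime_two.factorization_pos_of_dvd hn1 (by omega))
          (Nat.ordCompl_pos 2 hn1) ih
      · exact scfBound_of_not_prime hn hp (htc n hn hp) (hSc n hn hp) ih
  intro n hn
  have h := hbound n hn
  exact ⟨by have := h.1; omega, h.2, h.log_bound⟩
end
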